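/- Let H be a real separable Hilbert space and let f, g : H → (-∞,+∞] be proper lower semicontinuous convex functions. Suppose the set D := {x ∈ H : ∂f(x) ∩ ∂g(x) ≠ ∅} is dense in an open convex set U contained in the interior of dom(f) intersected with the interior of dom(g), where dom(f) := {x : f(x) < +∞}. Then ∂f(x) = ∂g(x) for every x ∈ U. -/

import Mathlib

open MeasureTheory Filter Topology

noncomputable section

/-- The subdifferential of an extended-real-valued function on a Hilbert space. -/
def subdiff {H : Type*} [NormedAddCommGroup H] [InnerProductSpace ℝ H]
    (f : H → EReal) (x : H) : Set H :=
  {y | ∀ z : H, f x + ((inner ℝ y (z - x) : ℝ) : EReal) ≤ f z}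

/-- The graph of the subdifferential. -/
def subdiffGraph {H : Type*} [NormedAddCommGroup H] [InnerProductSpace ℝ H]
    (f : H → EReal) : Set (H × H) :=
  {p | p.2 ∈ subdiff f p.1}

/-- Convexity for extended-real-valued functions. -/
def EConvexOn {H : Type*} [NormedAddCommGroup H] [InnerProductSpace ℝ H]
    (f : H → EReal) : Prop :=
  ∀ x y : H, ∀ t : ℝ, 0 ≤ t → t ≤ 1 →
    f (t • x + (1 - t) • y) ≤ (t : EReal) * f x + ((1 - t : ℝ) : EReal) * f y

/-- A proper lower semicontinuous convex function `H → (-∞, +∞]`. -/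
def ProperLscConvex {H : Type*} [NormedAddCommGroup H] [InnerProductSpace ℝ H]
    (f : H → EReal) : Prop :=
  (∃ x, f x ≠ ⊤) ∧ (∀ x, f x ≠ ⊥) ∧ LowerSemicontinuous f ∧ EConvexOn f

/-- A Lipschitz hypersurface: `{z + τ(z) • v : z ∈ (span v)ᵒᵖ}` for Lipschitz `τ`. -/
def IsLipschitzHypersurface {H : Type*} [NormedAddCommGroup H] [InnerProductSpace ℝ H]
    (A : Set H) : Prop :=
  ∃ v : H, v ≠ 0 ∧ ∃ (τ : H → ℝ) (K : NNReal),
    LipschitzOnWith K τ ((Submodule.span ℝ {v})ᗮ : Set H) ∧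
    A = (fun z : H => z + τ z • v) '' ((Submodule.span ℝ {v})ᗮ : Set H)

/-- Topological support of a measure. -/
def msupport {X : Type*} [TopologicalSpace X] {m : MeasurableSpace X}
    (μ : Measure X) : Set X :=
  {x | ∀ U : Set X, IsOpen U → x ∈ U → 0 < μ U}

/-- The class `P^ℓ(H)`: measures giving zero mass to all Lipschitz hypersurfaces. -/
def IsLipschitzNull {H : Type*} [NormedAddCommGroup H] [InnerProductSpace ℝ H]
    {m : MeasurableSpace H} (P : Measure H) : Prop :=
  ∀ A : Set H, IsLipschitzHypersurface A → P A = 0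

/-- Cyclical monotonicity of a subset of `H × H`. -/
def CyclicallyMonotone {H : Type*} [NormedAddCommGroup H] [InnerProductSpace ℝ H]
    (Γ : Set (H × H)) : Prop :=
  ∀ (n : ℕ) (q : Fin (n + 1) → H × H), (∀ k, q k ∈ Γ) →
    ∑ k : Fin (n + 1), (inner ℝ (q k).1 ((q (k + 1)).2 - (q k).2) : ℝ) ≤ 0

/-- Weak convergence of a sequence of measures against bounded continuous functions. -/
def WeakConv {X : Type*} [TopologicalSpace X] {m : MeasurableSpace X}
    (μ : ℕ → Measure X) (ν : Measure X) : Prop :=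
  ∀ f : BoundedContinuousFunction X ℝ,
    Tendsto (fun n => ∫ x, f x ∂(μ n)) atTop (𝓝 (∫ x, f x ∂ν))

/-!
Around a point `x` of `U` both functions are finite, lower semicontinuous and convex, so by Baire's
theorem they are bounded above near some point, hence locally Lipschitz, and their subgradients are
locally bounded. At points `p, q` carrying common subgradients `y p, y q`, the two subgradient
inequalities give `(f - g) q - (f - g) p ≥ ⟪y p - y q, q - p⟫`. Summed along a fine chain of such
points from `p` to `q` these gaps nearly telescope, so `f - g` is constant on the dense set and, by
continuity, near `x`. Since the subgradient inequality of a convex function is a local condition,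
two convex functions differing by a constant near `x` have the same subdifferential at `x`.
-/

open Metric Set Finset
open scoped RealInnerProductSpace

lemma LowerSemicontinuous.exists_eventually_le_of_ne_top {X : Type*} [TopologicalSpace X]
    [BaireSpace X] {f : X → EReal} (hf : LowerSemicontinuous f) {U : Set X} (hU : IsOpen U)
    (hne : U.Nonempty) (hfU : ∀ x ∈ U, f x ≠ ⊤) : ∃ x₀ ∈ U, ∃ M : ℝ, ∀ᶠ x in 𝓝 x₀, f x ≤ M := by
  have := hU.baireSpace
  have := hne.to_subtype
  have hcover : ⋃ n : ℕ, ((↑) : U → X) ⁻¹' (f ⁻¹' Iic ((n : ℝ) : EReal)) = univ := by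
    refine eq_univ_of_forall fun x => mem_iUnion.2 ?_
    obtain ⟨n, hn⟩ := exists_nat_ge (f x).toReal
    exact ⟨n, (EReal.le_coe_toReal (hfU x x.2)).trans (by exact_mod_cast hn)⟩
  obtain ⟨n, x₀, hx₀⟩ := nonempty_interior_of_iUnion_of_closed
    (fun n : ℕ => (hf.isClosed_preimage ((n : ℝ) : EReal)).preimage continuous_subtype_val) hcover
  exact ⟨x₀, x₀.2, n, mem_of_superset ((hU.isOpenMap_subtype_val _ isOpen_interior).mem_nhds
    (mem_image_of_mem _ hx₀)) (image_subset_iff.2 interior_subset)⟩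

section

variable {H : Type*} [NormedAddCommGroup H] [InnerProductSpace ℝ H]

lemma EConvexOn.convexOn_toReal {f : H → EReal} (hf : EConvexOn f) {U : Set H}
    (hU : Convex ℝ U) (hfU : ∀ x ∈ U, f x ≠ ⊤) (hbot : ∀ x, f x ≠ ⊥) :
    ConvexOn ℝ U fun x => (f x).toReal := by
  refine ⟨hU, fun x hx z hz a b ha hb hab => ?_⟩
  obtain rfl : b = 1 - a := by linarith
  have h := hf x z a ha (by linarith)
  rw [← EReal.coe_toReal (hfU x hx) (hbot x), ← EReal.coe_toReal (hfU z hz) (hbot z)] at h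
  have hfin : f (a • x + (1 - a) • z) ≠ ⊥ := hbot _
  rw [← EReal.coe_toReal (ne_top_of_le_ne_top (by exact_mod_cast EReal.coe_ne_top _) h) hfin] at h
  exact_mod_cast h

lemma locallyLipschitzOn_toReal [CompleteSpace H] {f : H → EReal} (hbot : ∀ x, f x ≠ ⊥)
    (hlsc : LowerSemicontinuous f) (hconv : EConvexOn f) {U : Set H} (hU : IsOpen U)
    (hUc : Convex ℝ U) (hne : U.Nonempty) (hfU : ∀ x ∈ U, f x ≠ ⊤) :
    LocallyLipschitzOn U fun x => (f x).toReal := by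
  obtain ⟨x₀, hx₀, M, hM⟩ := hlsc.exists_eventually_le_of_ne_top hU hne hfU
  have hbdd : ∃ x₀ ∈ U, (𝓝 x₀).IsBoundedUnder (· ≤ ·) fun x => (f x).toReal := by
    refine ⟨x₀, hx₀, isBoundedUnder_of_eventually_le (a := M) ?_⟩
    filter_upwards [hM] with x hx
    simpa using EReal.toReal_le_toReal hx (hbot x) (EReal.coe_ne_top M)
  exact (((hconv.convexOn_toReal hUc hfU hbot).continuousOn_tfae hU hne).out 3 0).mp hbdd

lemma toReal_add_inner_le_of_mem_subdiff {f : H → EReal} {x y z : H} (hy : y ∈ subdiff f x)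
    (hx : f x ≠ ⊥) (hz : f z ≠ ⊤) : (f x).toReal + ⟪y, z - x⟫ ≤ (f z).toReal := by
  have hxz := hy z
  have hx' : f x ≠ ⊤ := by
    rintro hx'
    rw [hx', EReal.top_add_coe, top_le_iff] at hxz
    exact hz hxz
  rw [← EReal.coe_toReal hx' hx] at hxz
  have hz' : f z ≠ ⊥ := ne_bot_of_le_ne_bot (EReal.coe_ne_bot _) hxz
  rw [← EReal.coe_toReal hz hz'] at hxz
  exact_mod_cast hxz

lemma mem_subdiff_of_eventually {g : H → EReal} {x y : H} (hg : EConvexOn g)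
    (hbot : ∀ z, g z ≠ ⊥) (hx : g x ≠ ⊤)
    (hloc : ∀ᶠ z in 𝓝 x, g x + ((⟪y, z - x⟫ : ℝ) : EReal) ≤ g z) : y ∈ subdiff g x := by
  intro z
  rcases eq_or_ne (g z) ⊤ with hz | hz
  · simp [hz]
  have hlim : Tendsto (fun t : ℝ => t • z + (1 - t) • x) (𝓝[>] 0) (𝓝 x) := by
    have hcont : Continuous fun t : ℝ => t • z + (1 - t) • x := by fun_prop
    simpa using (hcont.tendsto 0).mono_left nhdsWithin_le_nhds
  obtain ⟨t, hloc_t, ht0, ht1⟩ := ((hlim.eventually hloc).and (Ioo_mem_nhdsGT one_pos)).exists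
  have hconv := hg z x t ht0.le ht1.le
  have hstep : t • z + (1 - t) • x - x = t • (z - x) := by module
  rw [hstep, real_inner_smul_right] at hloc_t
  rw [← EReal.coe_toReal hx (hbot x)] at hconv hloc_t ⊢
  rw [← EReal.coe_toReal hz (hbot z)] at hconv ⊢
  have hreal : (g x).toReal + t * ⟪y, z - x⟫ ≤ t * (g z).toReal + (1 - t) * (g x).toReal := by
    exact_mod_cast hloc_t.trans hconv
  have : t * ((g x).toReal + ⟪y, z - x⟫) ≤ t * (g z).toReal := by linarith
  exact_mod_cast le_of_mul_le_mul_left this ht0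

lemma subdiff_subset_of_eventually_toReal_sub_eq {f g : H → EReal} {x : H} (hg : EConvexOn g)
    (hfbot : ∀ z, f z ≠ ⊥) (hgbot : ∀ z, g z ≠ ⊥)
    (hfin : ∀ᶠ z in 𝓝 x, f z ≠ ⊤ ∧ g z ≠ ⊤)
    (hfg : ∀ᶠ z in 𝓝 x, (f z).toReal - (g z).toReal = (f x).toReal - (g x).toReal) :
    subdiff f x ⊆ subdiff g x := by
  intro y hy
  have hgx : g x ≠ ⊤ := hfin.self_of_nhds.2
  refine mem_subdiff_of_eventually hg hgbot hgx ?_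
  filter_upwards [hfin, hfg] with z ⟨hfz, hgz⟩ hz
  have := toReal_add_inner_le_of_mem_subdiff hy (hfbot x) hfz
  rw [← EReal.coe_toReal hgx (hgbot x), ← EReal.coe_toReal hgz (hgbot z)]
  exact_mod_cast (by linarith : (g x).toReal + ⟪y, z - x⟫ ≤ (g z).toReal)

lemma norm_le_of_lipschitzOnWith_of_subgradient {φ : H → ℝ} {s : Set H} {K : NNReal} {w y : H}
    (hs : s ∈ 𝓝 w) (hφ : LipschitzOnWith K φ s) (hy : ∀ z ∈ s, φ w + ⟪y, z - w⟫ ≤ φ z) :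
    ‖y‖ ≤ K := by
  have hlim : Tendsto (fun t : ℝ => w + t • y) (𝓝[>] 0) (𝓝 w) := by
    have hcont : Continuous fun t : ℝ => w + t • y := by fun_prop
    simpa using (hcont.tendsto 0).mono_left nhdsWithin_le_nhds
  obtain ⟨t, hts, ht⟩ := ((hlim.eventually hs).and self_mem_nhdsWithin).exists
  have hgrowth := hy _ hts
  have hlip := hφ.dist_le_mul _ hts _ (mem_of_mem_nhds hs)
  rw [add_sub_cancel_left, real_inner_smul_right, real_inner_self_eq_norm_sq] at hgrowth
  rw [Real.dist_eq, dist_self_add_left, norm_smul, Real.norm_of_nonneg ht.le] at hlip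
  have : t * (‖y‖ * ‖y‖) ≤ t * (K * ‖y‖) := by nlinarith [le_abs_self (φ (w + t • y) - φ w)]
  have hyK : ‖y‖ * ‖y‖ ≤ K * ‖y‖ := le_of_mul_le_mul_left this (mem_Ioi.1 ht)
  by_contra! hlt
  nlinarith [K.coe_nonneg]

lemma exists_eventually_norm_le_of_mem_subdiff {f : H → EReal} {U : Set H} {x : H}
    (hU : IsOpen U) (hbot : ∀ w, f w ≠ ⊥) (hfU : ∀ w ∈ U, f w ≠ ⊤)
    (hF : LocallyLipschitzOn U fun w => (f w).toReal) (hx : x ∈ U) :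
    ∃ K : ℝ, ∀ᶠ w in 𝓝 x, ∀ y ∈ subdiff f w, ‖y‖ ≤ K := by
  obtain ⟨K, t, ht, hlip⟩ := hF hx
  rw [hU.nhdsWithin_eq hx] at ht
  refine ⟨K, ?_⟩
  filter_upwards [eventually_mem_nhds_iff.2 (inter_mem ht (hU.mem_nhds hx))] with w hw y hy
  exact norm_le_of_lipschitzOnWith_of_subgradient hw (hlip.mono inter_subset_left)
    fun z hz => toReal_add_inner_le_of_mem_subdiff hy (hbot w) (hfU z hz.2)

lemma neg_mul_le_real_inner {a b : H} {A B : ℝ} (ha : ‖a‖ ≤ A) (hb : ‖b‖ ≤ B) :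
    -(A * B) ≤ ⟪a, b⟫ :=
  (neg_le_neg ((abs_real_inner_le_norm a b).trans
    (mul_le_mul ha hb (norm_nonneg _) ((norm_nonneg _).trans ha)))).trans (neg_abs_le _)

lemma neg_le_sum_inner_sub_sub {u d : ℕ → H} {a v : H} {K ε : ℝ} (m : ℕ)
    (hu : ∀ i ≤ m, ‖u i‖ ≤ K) (hd : ∀ i ≤ m, ‖d i - (a + (i : ℝ) • v)‖ ≤ ε) :
    -(2 * K * ‖v‖ + 4 * K * ε * m) ≤ ∑ i ∈ range m, ⟪u i - u (i + 1), d (i + 1) - d i⟫ := by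
  have hu_sub : ∀ i < m, ‖u i - u (i + 1)‖ ≤ 2 * K := fun i hi => by
    linarith [norm_sub_le_of_le (hu i hi.le) (hu (i + 1) hi)]
  have hterm : ∀ i ∈ range m,
      ⟪u i - u (i + 1), v⟫ - 4 * K * ε ≤ ⟪u i - u (i + 1), d (i + 1) - d i⟫ := by
    intro i hi
    rw [Finset.mem_range] at hi
    have hsplit : d (i + 1) - d i =
        v + ((d (i + 1) - (a + ((i + 1 : ℕ) : ℝ) • v)) - (d i - (a + (i : ℝ) • v))) := by
      push_cast
      module
    have herr :=
      neg_mul_le_real_inner (hu_sub i hi) (norm_sub_le_of_le (hd (i + 1) hi) (hd i hi.le))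
    rw [hsplit, inner_add_right]
    linarith
  have hends : -(2 * K * ‖v‖) ≤ ⟪u 0 - u m, v⟫ :=
    neg_mul_le_real_inner (by linarith [norm_sub_le_of_le (hu 0 m.zero_le) (hu m le_rfl)]) le_rfl
  calc -(2 * K * ‖v‖ + 4 * K * ε * m) ≤ ⟪u 0 - u m, v⟫ - m * (4 * K * ε) := by linarith
    _ = ∑ i ∈ range m, (⟪u i - u (i + 1), v⟫ - 4 * K * ε) := by
      rw [sum_sub_distrib, ← sum_inner, sum_range_sub', sum_const, card_range, nsmul_eq_mul]
    _ ≤ _ := sum_le_sum hterm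

lemma le_of_forall_inner_sub_le_sub {S : Set H} {h : H → ℝ} {y : H → H} {K : ℝ}
    (hy : ∀ p ∈ S, ‖y p‖ ≤ K) (hinc : ∀ p ∈ S, ∀ q ∈ S, ⟪y p - y q, q - p⟫ ≤ h q - h p)
    {p q : H} (hp : p ∈ S) (hq : q ∈ S) (hpq : segment ℝ p q ⊆ closure S) : h p ≤ h q := by
  refine le_of_forall_pos_le_add fun η hη => ?_
  have hK : 0 ≤ K := (norm_nonneg _).trans (hy p hp)
  -- `m` makes the telescoped term `2 K ‖v‖` small, then `ε` the `m + 1` approximation errors.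
  obtain ⟨m, hm⟩ := exists_nat_gt (4 * K * ‖q - p‖ / η)
  have hm0 : (0 : ℝ) < m := lt_of_le_of_lt (by positivity) hm
  set v := (m : ℝ)⁻¹ • (q - p) with hv
  set ε := η / (8 * (K + 1) * (m + 1))
  have hε : 0 < ε := by positivity
  have hgrid : ∀ i : ℕ, p + ((min i m : ℕ) : ℝ) • v ∈ segment ℝ p q := by
    intro i
    rw [segment_eq_image']
    refine ⟨(min i m : ℕ) / m, ⟨by positivity,
      div_le_one_of_le₀ (by exact_mod_cast min_le_right i m) hm0.le⟩, ?_⟩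
    simp only [hv, smul_smul, div_eq_mul_inv]
  choose d hdS hd using fun i => Metric.mem_closure_iff.1 (hpq (hgrid i)) ε hε
  have hd' : ∀ i ≤ m, ‖d i - (p + (i : ℝ) • v)‖ ≤ ε := fun i hi => by
    simpa [min_eq_left hi, dist_eq_norm', norm_sub_rev] using (hd i).le
  have hsum := neg_le_sum_inner_sub_sub m (fun i hi => hy _ (hdS i)) hd'
  have hsteps :
      ∑ i ∈ range m, ⟪y (d i) - y (d (i + 1)), d (i + 1) - d i⟫ ≤ h (d m) - h (d 0) := by
    rw [← sum_range_sub (fun i => h (d i))]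
    exact sum_le_sum fun i _ => hinc _ (hdS i) _ (hdS (i + 1))
  have hstart := (neg_mul_le_real_inner (A := 2 * K)
    (by linarith [norm_sub_le_of_le (hy p hp) (hy _ (hdS 0))])
    (by simpa using hd' 0 m.zero_le)).trans (hinc p hp _ (hdS 0))
  have hend := (neg_mul_le_real_inner (A := 2 * K)
    (by linarith [norm_sub_le_of_le (hy _ (hdS m)) (hy q hq)])
    (by simpa [hv, smul_smul, hm0.ne', norm_sub_rev] using hd' m le_rfl)).trans
    (hinc _ (hdS m) q hq)
  have hvnorm : 2 * K * ‖v‖ < η / 2 := by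
    rw [hv, norm_smul, norm_inv, Real.norm_natCast, ← div_eq_inv_mul]
    rw [div_lt_iff₀ hη] at hm
    rw [mul_div_assoc', div_lt_iff₀ hm0]
    linarith
  have hεm : 4 * K * ε * m + 4 * K * ε ≤ η / 2 := by
    have hε_eq : ε * (8 * (K + 1) * (m + 1)) = η := div_mul_cancel₀ _ (by positivity)
    nlinarith [mul_nonneg hε.le (by positivity : (0 : ℝ) ≤ m + 1)]
  linarith

lemma toReal_sub_toReal_eq_of_subset_closure {f g : H → EReal} {B : Set H} {K : ℝ}
    (hBo : IsOpen B) (hBc : Convex ℝ B) (hfbot : ∀ w, f w ≠ ⊥) (hgbot : ∀ w, g w ≠ ⊥)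
    (hfB : ∀ w ∈ B, f w ≠ ⊤) (hgB : ∀ w ∈ B, g w ≠ ⊤)
    (hcont : ContinuousOn (fun w => (f w).toReal - (g w).toReal) B)
    (hK : ∀ w ∈ B, ∀ y ∈ subdiff f w, ‖y‖ ≤ K)
    (hdense : B ⊆ closure {x | (subdiff f x ∩ subdiff g x).Nonempty})
    {w w' : H} (hw : w ∈ B) (hw' : w' ∈ B) :
    (f w).toReal - (g w).toReal = (f w').toReal - (g w').toReal := by
  set S := B ∩ {x | (subdiff f x ∩ subdiff g x).Nonempty}
  have hBS : B ⊆ closure S := fun z hz => hBo.inter_closure ⟨hz, hdense hz⟩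
  choose! y hy using fun p (hp : p ∈ S) => hp.2
  have hinc : ∀ p ∈ S, ∀ q ∈ S, ⟪y p - y q, q - p⟫ ≤
      ((f q).toReal - (g q).toReal) - ((f p).toReal - (g p).toReal) := by
    intro p hp q hq
    have hf := toReal_add_inner_le_of_mem_subdiff (hy p hp).1 (hfbot p) (hfB q hq.1)
    have hg := toReal_add_inner_le_of_mem_subdiff (hy q hq).2 (hgbot q) (hgB p hp.1)
    rw [← neg_sub, inner_neg_right] at hg
    rw [inner_sub_left]
    linarith
  have hle : ∀ p ∈ S, ∀ q ∈ S,
      (f p).toReal - (g p).toReal ≤ (f q).toReal - (g q).toReal := fun p hp q hq =>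
    le_of_forall_inner_sub_le_sub (fun z hz => hK z hz.1 _ (hy z hz).1) hinc hp hq
      ((hBc.segment_subset hp.1 hq.1).trans hBS)
  obtain ⟨p, hp⟩ := closure_nonempty_iff.1 ⟨w, hBS hw⟩
  have hconst :
      EqOn (fun z => (f z).toReal - (g z).toReal) (fun _ => (f p).toReal - (g p).toReal) B :=
    EqOn.of_subset_closure (fun q hq => le_antisymm (hle q hq p hp) (hle p hp q hq)) hcont
      continuousOn_const inter_subset_left hBS
  exact (hconst hw).trans (hconst hw').symm

end

theorem subdifferentials_agree_of_dense_general
    {H : Type*} [NormedAddCommGroup H] [InnerProductSpace ℝ H]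
    [CompleteSpace H]
    (f g : H → EReal) (hf : ProperLscConvex f) (hg : ProperLscConvex g)
    (U : Set H) (hUo : IsOpen U)
    (hUdom : U ⊆ interior {x : H | f x ≠ ⊤} ∩ interior {x : H | g x ≠ ⊤})
    (hdense : U ⊆ closure {x : H | (subdiff f x ∩ subdiff g x).Nonempty}) :
    ∀ x ∈ U, subdiff f x = subdiff g x := by
  intro x hx
  obtain ⟨-, hfbot, hflsc, hfconv⟩ := hf
  obtain ⟨-, hgbot, hglsc, hgconv⟩ := hg
  obtain ⟨r, hr, hrU⟩ := Metric.isOpen_iff.1 hUo x hx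
  have hfB : ∀ w ∈ ball x r, f w ≠ ⊤ := fun w hw => interior_subset (hUdom (hrU hw)).1
  have hgB : ∀ w ∈ ball x r, g w ≠ ⊤ := fun w hw => interior_subset (hUdom (hrU hw)).2
  have hne : (ball x r).Nonempty := ⟨x, mem_ball_self hr⟩
  have hF := locallyLipschitzOn_toReal hfbot hflsc hfconv isOpen_ball (convex_ball x r) hne hfB
  have hG := locallyLipschitzOn_toReal hgbot hglsc hgconv isOpen_ball (convex_ball x r) hne hgB
  obtain ⟨K, hK⟩ := exists_eventually_norm_le_of_mem_subdiff isOpen_ball hfbot hfB hF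
    (mem_ball_self hr)
  obtain ⟨ρ, hρ, hρr⟩ := Metric.eventually_nhds_iff_ball.1 (hK.and (ball_mem_nhds x hr))
  have hconst : ∀ w ∈ ball x ρ, (f w).toReal - (g w).toReal = (f x).toReal - (g x).toReal :=
    fun w hw => toReal_sub_toReal_eq_of_subset_closure isOpen_ball (convex_ball x ρ) hfbot hgbot
      (fun z hz => hfB z (hρr z hz).2) (fun z hz => hgB z (hρr z hz).2)
      ((hF.continuousOn.sub hG.continuousOn).mono fun z hz => (hρr z hz).2)
      (fun z hz => (hρr z hz).1) (fun z hz => hdense (hrU (hρr z hz).2)) hw (mem_ball_self hρ)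
  have hfin : ∀ᶠ w in 𝓝 x, f w ≠ ⊤ ∧ g w ≠ ⊤ :=
    eventually_of_mem (ball_mem_nhds x hr) fun w hw => ⟨hfB w hw, hgB w hw⟩
  have hfg : ∀ᶠ w in 𝓝 x, (f w).toReal - (g w).toReal = (f x).toReal - (g x).toReal :=
    eventually_of_mem (ball_mem_nhds x hρ) hconst
  exact (subdiff_subset_of_eventually_toReal_sub_eq hgconv hfbot hgbot hfin hfg).antisymm
    (subdiff_subset_of_eventually_toReal_sub_eq hfconv hgbot hfbot (hfin.mono fun _ => And.symm)
      (hfg.mono fun w hw => by linarith))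

theorem subdifferentials_agree_of_dense
    {H : Type*} [NormedAddCommGroup H] [InnerProductSpace ℝ H]
    [CompleteSpace H] [SecondCountableTopology H]
    (f g : H → EReal) (hf : ProperLscConvex f) (hg : ProperLscConvex g)
    (U : Set H) (hUo : IsOpen U) (hUconv : Convex ℝ U)
    (hUdom : U ⊆ interior {x : H | f x ≠ ⊤} ∩ interior {x : H | g x ≠ ⊤})
    (hdense : U ⊆ closure {x : H | (subdiff f x ∩ subdiff g x).Nonempty}) :
    ∀ x ∈ U, subdiff f x = subdiff g x :=
  subdifferentials_agree_of_dense_general f g hf hg U hUo hUdom hdense
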